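/- arXiv:1904.11668 — 5 statements merged into one kernel-verified Lean document; each statement's English description precedes it below -/
import Mathlib

section
/- Let (M, 𝒜) be an uncertainty matroid on a finite ground set E. Then (M, 𝒜) admits a uniformly optimal basis if and only if every uncertain element of E is colored. -/
open Matroid

variable {α : Type*}

/-- `A` is an uncertainty area function for `M`: each element of the ground set gets a
nonempty bounded set of reals. -/
def IsAreaFun (M : Matroid α) (A : α → Set ℝ) : Prop :=
  ∀ e ∈ M.E, (A e).Nonempty ∧ BddBelow (A e) ∧ BddAbove (A e)

/-- A realization: a weight function with `w e ∈ A e` for every element of the ground set. -/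
def Realization (M : Matroid α) (A : α → Set ℝ) (w : α → ℝ) : Prop :=
  ∀ e ∈ M.E, w e ∈ A e

/-- The total `w`-weight of a set. -/
noncomputable def setWeight (w : α → ℝ) (T : Set α) : ℝ := ∑ᶠ e ∈ T, w e

/-- A `w`-basis: a basis of `M` of minimum total `w`-weight. -/
def IsMinBasis (M : Matroid α) (w : α → ℝ) (T : Set α) : Prop :=
  M.IsBase T ∧ ∀ B, M.IsBase B → setWeight w T ≤ setWeight w B

/-- A uniformly optimal basis (an `A`-basis): a `w`-basis for every realization `w`. -/
def IsUOB (M : Matroid α) (A : α → Set ℝ) (T : Set α) : Prop :=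
  ∀ w, Realization M A w → IsMinBasis M w T

/-- An element is certain if its area is a singleton. -/
def Certain (A : α → Set ℝ) (e : α) : Prop := ∃ r : ℝ, A e = {r}

/-- `e` is blue if every realization admits a minimum weight basis containing `e`. -/
def Blue (M : Matroid α) (A : α → Set ℝ) (e : α) : Prop :=
  ∀ w, Realization M A w → ∃ T, IsMinBasis M w T ∧ e ∈ T

/-- `e` is red if every realization admits a minimum weight basis avoiding `e`. -/
def Red (M : Matroid α) (A : α → Set ℝ) (e : α) : Prop :=
  ∀ w, Realization M A w → ∃ T, IsMinBasis M w T ∧ e ∉ T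

/-- `e` is colored if it is blue or red. -/
def Colored (M : Matroid α) (A : α → Set ℝ) (e : α) : Prop :=
  Blue M A e ∨ Red M A e

/-!
Write `L e = sInf (A e)` and `U e = sSup (A e)`. A basis `T` has minimum `w`-weight iff every
element `e` lies in the closure of `{f ∈ T | w f ≤ w e}`. Testing a blue `e` against a
realization that pushes `e` up and the elements of a set `S` with `L < U e` down shows
`e ∉ cl S`; dually, a red `e` lies in the closure of `{f | U f ≤ L e}`. Now take a `U`-minimum
basis `T` containing as many uncertain blue elements as possible. By the first fact it contains
all of them, so every `e ∉ T` is certain or red and hence lies in the closure of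
`{f ∈ T | U f ≤ L e}`, a subset of `{f ∈ T | w f ≤ w e}` for every realization `w`.
-/

open Set

namespace Matroid

variable {M : Matroid α} {B I : Set α} {e : α}

lemma IsBase.exists_exchange_of_notMem_closure (hB : M.IsBase B) (heE : e ∈ M.E)
    (heB : e ∉ B) (heI : e ∉ M.closure I) : ∃ f ∈ B \ I, M.IsBase (insert e (B \ {f})) := by
  have hC := hB.fundCircuit_isCircuit heE heB
  have hCI : ¬ M.fundCircuit e B ⊆ insert e I := fun hsub =>
    heI <| M.closure_subset_closure (by simpa using hsub)
      (hC.mem_closure_sdiff_singleton_of_mem (M.mem_fundCircuit e B))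
  obtain ⟨f, hfC, hfI⟩ := not_subset.1 hCI
  have hfe : f ≠ e := fun h => hfI (h ▸ mem_insert _ _)
  have hfB : f ∈ B := ((M.fundCircuit_subset_insert e B) hfC).resolve_left hfe
  have hind := (hB.indep.mem_fundCircuit_iff (hB.closure_eq ▸ heE) heB).1 hfC
  rw [← insert_sdiff_singleton_comm hfe.symm] at hind
  exact ⟨f, ⟨hfB, fun h => hfI (mem_insert_of_mem _ h)⟩, hB.exchange_isBase_of_indep heB hind⟩

lemma IsBase.exists_exchange_of_mem_closure (hB : M.IsBase B) (hIE : I ⊆ M.E) (heB : e ∈ B)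
    (heI : e ∉ I) (hecl : e ∈ M.closure I) : ∃ f ∈ I \ B, M.IsBase (insert f (B \ {e})) := by
  by_contra! h
  refine hB.indep.notMem_closure_sdiff_of_mem heB
    (M.closure_subset_closure_of_subset_closure (fun f hf => ?_) hecl)
  by_cases hfB : f ∈ B
  · exact M.mem_closure_of_mem' ⟨hfB, ne_of_mem_of_not_mem hf heI⟩ (hIE hf)
  · by_contra hcl
    exact h f ⟨hf, hfB⟩ (hB.exchange_base_of_notMem_closure heB hcl (hIE hf))

end Matroid

lemma setWeight_insert_sdiff_singleton {w : α → ℝ} {s : Set α} {a b : α} (hs : s.Finite)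
    (ha : a ∉ s) (hb : b ∈ s) :
    setWeight w (insert a (s \ {b})) = setWeight w s + w a - w b := by
  have hb' : b ∉ s \ {b} := fun h => h.2 rfl
  have hsplit : setWeight w s = w b + setWeight w (s \ {b}) := by
    unfold setWeight
    rw [← finsum_mem_insert w hb' hs.sdiff, insert_sdiff_singleton, insert_eq_of_mem hb]
  unfold setWeight at hsplit ⊢
  rw [finsum_mem_insert w (fun h => ha h.1) hs.sdiff, hsplit]
  ring

section MinBasis

variable {M : Matroid α} [M.Finite] {w : α → ℝ} {T : Set α}

lemma IsMinBasis.closure_subset_closure (hT : IsMinBasis M w T) (t : ℝ) :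
    M.closure {e | w e ≤ t} ⊆ M.closure {f ∈ T | w f ≤ t} := by
  rw [← closure_inter_ground]
  refine M.closure_subset_closure_of_subset_closure fun e ⟨het, heE⟩ => ?_
  by_contra hecl
  have heT : e ∉ T := fun h => hecl (M.mem_closure_of_mem' ⟨h, het⟩ heE)
  obtain ⟨f, ⟨hfT, hft⟩, hB⟩ := hT.1.exists_exchange_of_notMem_closure heE heT hecl
  have hle := hT.2 _ hB
  rw [setWeight_insert_sdiff_singleton (M.set_finite T hT.1.subset_ground) heT hfT] at hle
  exact hft ⟨hfT, by linarith [show w e ≤ t from het]⟩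

lemma isMinBasis_of_forall_mem_closure (hT : M.IsBase T)
    (h : ∀ e ∈ M.E, e ∈ M.closure {f ∈ T | w f ≤ w e}) : IsMinBasis M w T := by
  refine ⟨hT, fun B hB => ?_⟩
  induction hn : (B \ T).ncard generalizing B with
  | zero =>
    have hBT : B \ T = ∅ :=
      (ncard_eq_zero (M.set_finite _ (sdiff_subset.trans hB.subset_ground))).1 hn
    rw [hB.eq_of_subset_isBase hT (sdiff_eq_empty.1 hBT)]
  | succ n ih =>
    obtain ⟨b, hbB, hbT⟩ := nonempty_of_ncard_ne_zero (hn.trans_ne n.succ_ne_zero)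
    obtain ⟨t, ⟨⟨htT, htb⟩, htB⟩, hB'⟩ := hB.exists_exchange_of_mem_closure
      ((sep_subset T _).trans hT.subset_ground) hbB (fun h => hbT h.1)
      (h b (hB.subset_ground hbB))
    have hcard : (insert t (B \ {b}) \ T).ncard = n := by
      rw [insert_sdiff_of_mem _ htT, Set.sdiff_sdiff_comm,
        ncard_sdiff_singleton_of_mem (s := B \ T) ⟨hbB, hbT⟩, hn, Nat.add_sub_cancel]
    calc setWeight w T ≤ setWeight w (insert t (B \ {b})) := ih _ hB' hcard
      _ = setWeight w B + w t - w b :=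
          setWeight_insert_sdiff_singleton (M.set_finite B hB.subset_ground) htB hbB
      _ ≤ setWeight w B := by linarith

end MinBasis

section TieBreak

variable {M : Matroid α} [M.Finite]

lemma exists_isMinBasis_superset (w : α → ℝ) {X : Set α} (hXE : X ⊆ M.E)
    (hX : ∀ e ∈ X, e ∉ M.closure {f ∈ M.E | f ≠ e ∧ (w f < w e ∨ (w f = w e ∧ f ∈ X))}) :
    ∃ T, IsMinBasis M w T ∧ X ⊆ T := by
  have hbases : {T | M.IsBase T}.Finite :=
    M.ground_finite.finite_subsets.subset fun T hT => hT.subset_ground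
  obtain ⟨T₀, hT₀, hT₀min⟩ := exists_min_image _ (setWeight w) hbases M.exists_isBase
  obtain ⟨T, hT, hTmax⟩ := exists_max_image {T | IsMinBasis M w T} (fun T => (T ∩ X).ncard)
    (hbases.subset fun T hT => hT.1) ⟨T₀, (⟨hT₀, hT₀min⟩ : IsMinBasis M w T₀)⟩
  refine ⟨T, hT, fun e heX => ?_⟩
  by_contra heT
  have hsub : {f ∈ T | w f < w e ∨ (w f = w e ∧ f ∈ X)} ⊆
      {f ∈ M.E | f ≠ e ∧ (w f < w e ∨ (w f = w e ∧ f ∈ X))} :=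
    fun f hf => ⟨hT.1.subset_ground hf.1, fun hfe => heT (hfe ▸ hf.1), hf.2⟩
  have hecl := fun h => hX e heX (M.closure_subset_closure hsub h)
  obtain ⟨f, ⟨hfT, hfI⟩, hB⟩ := hT.1.exists_exchange_of_notMem_closure (hXE heX) heT hecl
  have hTfin := M.set_finite T hT.1.subset_ground
  have hweight := setWeight_insert_sdiff_singleton (w := w) hTfin heT hfT
  have hef : w e ≤ w f := not_lt.1 fun h => hfI ⟨hfT, Or.inl h⟩
  have hfe : w f = w e := le_antisymm (by linarith [hT.2 _ hB]) hef
  have hfX : f ∉ X := fun h => hfI ⟨hfT, Or.inr ⟨hfe, h⟩⟩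
  have hB' : IsMinBasis M w (insert e (T \ {f})) := ⟨hB, fun B hB => by linarith [hT.2 B hB]⟩
  have hcard := hTmax _ hB'
  have hinter : insert e (T \ {f}) ∩ X = insert e (T ∩ X) := by
    ext x; simp only [mem_inter_iff, mem_insert_iff, mem_sdiff, mem_singleton_iff]
    grind
  rw [hinter, ncard_insert_of_notMem (fun h => heT h.1) (hTfin.inter_of_left X)] at hcard
  omega

end TieBreak

section Uncertainty

variable {M : Matroid α} {A : α → Set ℝ} {e : α}

lemma IsAreaFun.sInf_le_sSup (hA : IsAreaFun M A) (he : e ∈ M.E) : sInf (A e) ≤ sSup (A e) :=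
  csInf_le_csSup (hA e he).1 (hA e he).2.1 (hA e he).2.2

lemma IsAreaFun.sInf_lt_sSup (hA : IsAreaFun M A) (he : e ∈ M.E) (hc : ¬ Certain A e) :
    sInf (A e) < sSup (A e) := by
  refine (hA.sInf_le_sSup he).lt_of_ne fun h => hc ⟨sInf (A e), ?_⟩
  refine eq_singleton_iff_nonempty_unique_mem.2 ⟨(hA e he).1, fun x hx => ?_⟩
  exact le_antisymm (h ▸ le_csSup (hA e he).2.2 hx) (csInf_le (hA e he).2.1 hx)

lemma Certain.sSup_le_sInf (hc : Certain A e) : sSup (A e) ≤ sInf (A e) := by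
  obtain ⟨r, hr⟩ := hc
  rw [hr, csSup_singleton, csInf_singleton]

lemma IsAreaFun.exists_realization (hA : IsAreaFun M A) {S : Set α} (heS : e ∉ S)
    {P Q : ℝ → Prop} (hP : ∃ x ∈ A e, P x) (hQ : ∀ f ∈ S, ∃ x ∈ A f, Q x) :
    ∃ w, Realization M A w ∧ P (w e) ∧ ∀ f ∈ S, Q (w f) := by
  have key : ∀ f, ∃ x, (f ∈ M.E → x ∈ A f) ∧ (f = e → P x) ∧ (f ∈ S → Q x) := by
    intro f
    by_cases hfe : f = e
    · obtain ⟨x, hx, hPx⟩ := hP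
      subst hfe
      exact ⟨x, fun _ => hx, fun _ => hPx, fun h => absurd h heS⟩
    by_cases hfS : f ∈ S
    · obtain ⟨x, hx, hQx⟩ := hQ f hfS
      exact ⟨x, fun _ => hx, fun h => absurd h hfe, fun _ => hQx⟩
    by_cases hfE : f ∈ M.E
    · obtain ⟨x, hx⟩ := (hA f hfE).1
      exact ⟨x, fun _ => hx, fun h => absurd h hfe, fun h => absurd h hfS⟩
    · exact ⟨0, fun h => absurd h hfE, fun h => absurd h hfe, fun h => absurd h hfS⟩
  choose w hw using key
  exact ⟨w, fun f hf => (hw f).1 hf, (hw e).2.1 rfl, fun f hf => (hw f).2.2 hf⟩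

variable [M.Finite]

lemma Blue.notMem_closure (hblue : Blue M A e) (hA : IsAreaFun M A) (he : e ∈ M.E)
    {S : Set α} (hSE : S ⊆ M.E) (heS : e ∉ S) (hS : ∀ f ∈ S, sInf (A f) < sSup (A e)) :
    e ∉ M.closure S := by
  intro hecl
  obtain ⟨c, hcS, hce⟩ : ∃ c, (∀ f ∈ S, sInf (A f) < c) ∧ c < sSup (A e) :=
    (((Filter.eventually_all_finite (M.set_finite S hSE)).2 fun f hf =>
      (eventually_gt_nhds (hS f hf)).filter_mono nhdsWithin_le_nhds).and
        (eventually_mem_nhdsWithin (s := Iio _))).exists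
  obtain ⟨w, hw, hwe, hwS⟩ := hA.exists_realization heS (P := (c < ·)) (Q := (· < c))
    (exists_lt_of_lt_csSup (hA e he).1 hce)
    fun f hf => exists_lt_of_csInf_lt (hA f (hSE hf)).1 (hcS f hf)
  obtain ⟨T, hT, heT⟩ := hblue w hw
  have hecl' : e ∈ M.closure {f ∈ T | w f ≤ c} :=
    hT.closure_subset_closure c (M.closure_subset_closure (fun f hf => (hwS f hf).le) hecl)
  refine hT.1.indep.notMem_closure_sdiff_of_mem heT (M.closure_subset_closure ?_ hecl')
  exact fun f hf => ⟨hf.1, fun h => (hf.2.trans_lt hwe).ne (congrArg w (mem_singleton_iff.1 h))⟩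

lemma Red.mem_closure (hred : Red M A e) (hA : IsAreaFun M A) (he : e ∈ M.E) :
    e ∈ M.closure {f | sSup (A f) ≤ sInf (A e)} := by
  set S := {f ∈ M.E | f ≠ e ∧ sInf (A e) < sSup (A f)}
  obtain ⟨c, hec, hcS⟩ : ∃ c, sInf (A e) < c ∧ ∀ f ∈ S, c < sSup (A f) :=
    ((eventually_mem_nhdsWithin (s := Ioi _)).and ((Filter.eventually_all_finite
      (M.set_finite S (sep_subset _ _))).2 fun f hf =>
        (eventually_lt_nhds hf.2.2).filter_mono nhdsWithin_le_nhds)).exists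
  obtain ⟨w, hw, hwe, hwS⟩ := hA.exists_realization (fun h => h.2.1 rfl : e ∉ S)
    (P := (· < c)) (Q := (c < ·)) (exists_lt_of_csInf_lt (hA e he).1 hec)
    fun f hf => exists_lt_of_lt_csSup (hA f hf.1).1 (hcS f hf)
  obtain ⟨T, hT, heT⟩ := hred w hw
  refine M.closure_subset_closure (fun f hf => ?_)
    (hT.closure_subset_closure (w e) (M.mem_closure_of_mem' (le_refl (w e)) he))
  by_contra hlt
  have := hwS f ⟨hT.1.subset_ground hf.1, fun h => heT (h ▸ hf.1), not_le.1 hlt⟩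
  linarith [hf.2]

end Uncertainty

/-- An uncertainty matroid admits a uniformly optimal basis iff every uncertain element
is colored. -/
theorem exists_uob_iff_uncertain_colored (M : Matroid α) (A : α → Set ℝ)
    (hE : M.E.Finite) (hA : IsAreaFun M A) :
    (∃ T, IsUOB M A T) ↔ ∀ e ∈ M.E, ¬ Certain A e → Colored M A e := by
  have : M.Finite := ⟨hE⟩
  refine ⟨fun ⟨T, hT⟩ e _ _ => ?_, fun hcol => ?_⟩
  · by_cases heT : e ∈ T
    exacts [Or.inl fun w hw => ⟨T, hT w hw, heT⟩, Or.inr fun w hw => ⟨T, hT w hw, heT⟩]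
  set X := {e ∈ M.E | ¬ Certain A e ∧ Blue M A e}
  obtain ⟨T, hT, hXT⟩ :=
    exists_isMinBasis_superset (fun e => sSup (A e)) (X := X) (sep_subset _ _)
    fun e ⟨he, _, hblue⟩ => hblue.notMem_closure hA he (sep_subset _ _) (fun h => h.2.1 rfl)
      fun f ⟨hf, _, hlt⟩ => hlt.elim (hA.sInf_le_sSup hf).trans_lt
        fun ⟨heq, hfX⟩ => heq ▸ hA.sInf_lt_sSup hf hfX.2.1
  refine ⟨T, fun w hw => isMinBasis_of_forall_mem_closure hT.1 fun e he => ?_⟩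
  by_cases heT : e ∈ T
  · exact M.mem_closure_of_mem' ⟨heT, le_rfl⟩ he
  have hecl : e ∈ M.closure {f | sSup (A f) ≤ sInf (A e)} := by
    by_cases hc : Certain A e
    · exact M.mem_closure_of_mem' hc.sSup_le_sInf he
    · exact ((hcol e he hc).resolve_left fun hb => heT (hXT ⟨he, hc, hb⟩)).mem_closure hA he
  have hsub : {f ∈ T | sSup (A f) ≤ sInf (A e)} ⊆ {f ∈ T | w f ≤ w e} := fun f ⟨hfT, hf⟩ =>
    have hfE := hT.1.subset_ground hfT
    ⟨hfT, calc w f ≤ sSup (A f) := le_csSup (hA f hfE).2.2 (hw f hfE)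
      _ ≤ sInf (A e) := hf
      _ ≤ w e := csInf_le (hA e he).2.1 (hw e he)⟩
  exact M.closure_subset_closure hsub (hT.closure_subset_closure _ hecl)
end

section
/- Let (M, 𝒜) be an uncertainty matroid on a finite ground set E that admits a uniformly optimal basis. Let B be the set of blue uncertain elements and R the set of red uncertain elements, so that every element of E \ (B ∪ R) is certain, and let w^c assign to each certain element e the unique element of 𝒜(e). Then T ⊆ E is a uniformly optimal basis of (M, 𝒜) if and only if: (i) B ⊆ T; (ii) T ∩ R = ∅; and (iii) T \ B is a minimum-weight basis of the minor M / B \ R (contract B, delete R) with respect to w^c. -/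
open Matroid

variable {α : Type*}

/-- Deletion of a set of elements from a matroid. -/
def Matroid.del (M : Matroid α) (D : Set α) : Matroid α := M ↾ (M.E \ D)

/-- Contraction of a set of elements in a matroid, defined by duality. -/
def Matroid.con (M : Matroid α) (C : Set α) : Matroid α := (M✶.del C)✶

/-!
Raising the weight of one uncertain element `e` from an admissible value to a larger one cannot
make a basis containing `e` optimal while one avoiding `e` was optimal before; comparing a
uniformly optimal basis with the blue (resp. red) witness of `e` therefore shows that it contains
every uncertain blue element and avoids every uncertain red one. All remaining elements are
certain, so on a basis `S ⊇ B` avoiding `R` every realization `w` has weight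
`w(B) + w^c(S \ B)`. Such bases are exactly the lifts `S' ∪ B` of the bases `S'` of `M / B \ R`,
and a fixed uniformly optimal basis transfers optimality in both directions.
-/

open Set

section UncertaintyMatroid

variable {M : Matroid α} {A : α → Set ℝ} {w w' : α → ℝ} {B R S T T₀ X Y : Set α} {e : α}
  {a b : ℝ}

lemma setWeight_congr (h : ∀ x ∈ S, w x = w' x) : setWeight w S = setWeight w' S :=
  finsum_mem_congr rfl h

lemma setWeight_eq_add_sdiff (hS : S.Finite) (hBS : B ⊆ S) :
    setWeight w S = setWeight w B + setWeight w (S \ B) :=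
  (finsum_mem_add_sdiff hBS hS).symm

lemma setWeight_update_of_notMem [DecidableEq α] (he : e ∉ S) :
    setWeight (Function.update w e a) S = setWeight w S :=
  setWeight_congr fun _ hx => Function.update_of_ne (ne_of_mem_of_not_mem hx he) _ _

lemma setWeight_update_of_mem [DecidableEq α] (hS : S.Finite) (he : e ∈ S) :
    setWeight (Function.update w e a) S = setWeight w S + (a - w e) := by
  have hsplit : ∀ v : α → ℝ, setWeight v S = v e + setWeight v (S \ {e}) := fun v => by
    rw [setWeight_eq_add_sdiff hS (singleton_subset_iff.2 he), setWeight, finsum_mem_singleton]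
  rw [hsplit, hsplit w, Function.update_self,
    setWeight_update_of_notMem fun h : e ∈ S \ {e} => h.2 rfl]
  ring

lemma IsMinBasis.mem_of_update_lt [DecidableEq α] (hY : IsMinBasis M (Function.update w e a) Y)
    (hX : IsMinBasis M (Function.update w e b) X) (hab : a < b) (hXfin : X.Finite)
    (heX : e ∈ X) : e ∈ Y := by
  by_contra heY
  have hYX := hY.2 X hX.1
  have hXY := hX.2 Y hY.1
  rw [setWeight_update_of_mem hXfin heX, setWeight_update_of_notMem heY] at hYX hXY
  linarith

lemma IsAreaFun.exists_realization_s1 (hA : IsAreaFun M A) : ∃ w, Realization M A w := by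
  classical
  refine ⟨fun e => if h : (A e).Nonempty then h.some else 0, fun e he => ?_⟩
  simp only [dif_pos (hA e he).1]
  exact (hA e he).1.some_mem

lemma Realization.update [DecidableEq α] (hw : Realization M A w) (ha : a ∈ A e) :
    Realization M A (Function.update w e a) := by
  intro x hx
  rcases eq_or_ne x e with rfl | hxe
  · rwa [Function.update_self]
  · rw [Function.update_of_ne hxe]
    exact hw x hx

lemma exists_lt_of_not_certain (hne : (A e).Nonempty) (hnc : ¬ Certain A e) :
    ∃ a ∈ A e, ∃ b ∈ A e, a < b :=
  (hne.exists_eq_singleton_or_nontrivial.resolve_left hnc).exists_lt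

lemma IsUOB.mem_of_blue (hE : M.E.Finite) (hA : IsAreaFun M A) (hT : IsUOB M A T)
    (he : e ∈ M.E) (hnc : ¬ Certain A e) (hblue : Blue M A e) : e ∈ T := by
  classical
  obtain ⟨w, hw⟩ := hA.exists_realization_s1
  obtain ⟨a, ha, b, hb, hab⟩ := exists_lt_of_not_certain (hA e he).1 hnc
  obtain ⟨S, hS, heS⟩ := hblue _ (hw.update hb)
  exact (hT _ (hw.update ha)).mem_of_update_lt hS hab (hE.subset hS.1.subset_ground) heS

lemma IsUOB.notMem_of_red (hE : M.E.Finite) (hA : IsAreaFun M A) (hT : IsUOB M A T)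
    (he : e ∈ M.E) (hnc : ¬ Certain A e) (hred : Red M A e) : e ∉ T := by
  classical
  obtain ⟨w, hw⟩ := hA.exists_realization_s1
  obtain ⟨a, ha, b, hb, hab⟩ := exists_lt_of_not_certain (hA e he).1 hnc
  obtain ⟨S, hS, heS⟩ := hred _ (hw.update ha)
  have hTmin := hT _ (hw.update hb)
  exact fun heT => heS (hS.mem_of_update_lt hTmin hab (hE.subset hTmin.1.subset_ground) heT)

lemma isBase_contract_delete_iff (hT₀ : M.IsBase T₀) (hBT₀ : B ⊆ T₀) (hT₀R : Disjoint T₀ R)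
    (hRE : R ⊆ M.E) :
    (M ／ B ＼ R).IsBase S ↔ M.IsBase (S ∪ B) ∧ Disjoint S B ∧ Disjoint S R := by
  have hB : M.Indep B := hT₀.indep.subset hBT₀
  have hcoindep : (M ／ B).Coindep R := by
    refine Matroid.coindep_iff_exists'.2 ⟨⟨T₀ \ B, ?_, ?_⟩, ?_⟩
    · rw [hB.contract_isBase_iff, sdiff_union_of_subset hBT₀]
      exact ⟨hT₀, disjoint_sdiff_left⟩
    · exact subset_sdiff.2 ⟨sdiff_subset_sdiff_left hT₀.subset_ground,
        hT₀R.mono_left sdiff_subset⟩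
    · exact subset_sdiff.2 ⟨hRE, (hT₀R.mono_left hBT₀).symm⟩
  rw [hcoindep.delete_isBase_iff, hB.contract_isBase_iff, and_assoc]

theorem isMinBasis_iff_isMinBasis_contract_delete (hE : M.E.Finite) (hRE : R ⊆ M.E)
    (hw : ∀ x ∈ M.E, x ∉ B → x ∉ R → w x = w' x) (hT₀ : IsMinBasis M w T₀) (hBT₀ : B ⊆ T₀)
    (hT₀R : Disjoint T₀ R) (hBT : B ⊆ T) (hTR : Disjoint T R) :
    IsMinBasis M w T ↔ IsMinBasis (M ／ B ＼ R) w' (T \ B) := by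
  have hbase (S : Set α) := isBase_contract_delete_iff (S := S) hT₀.1 hBT₀ hT₀R hRE
  have hsplit (S : Set α) (hS : M.IsBase S) (hBS : B ⊆ S) (hSR : Disjoint S R) :
      setWeight w S = setWeight w B + setWeight w' (S \ B) := by
    rw [setWeight_eq_add_sdiff (hE.subset hS.subset_ground) hBS]
    exact congrArg _ (setWeight_congr fun x hx =>
      hw x (hS.subset_ground hx.1) hx.2 (hSR.notMem_of_mem_left hx.1))
  have hlift (S : Set α) (hBS : B ⊆ S) (hSR : Disjoint S R) :
      (M ／ B ＼ R).IsBase (S \ B) ↔ M.IsBase S := by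
    rw [hbase, sdiff_union_of_subset hBS]
    exact ⟨And.left, fun hS => ⟨hS, disjoint_sdiff_left, hSR.mono_left sdiff_subset⟩⟩
  constructor
  · rintro ⟨hT, hTmin⟩
    refine ⟨(hlift T hBT hTR).2 hT, fun S hS => ?_⟩
    obtain ⟨hSB, hdisjB, hdisjR⟩ := (hbase S).1 hS
    have hle := hTmin _ hSB
    rw [hsplit T hT hBT hTR, hsplit _ hSB subset_union_right
      (hdisjR.union_left (hT₀R.mono_left hBT₀)), union_sdiff_right,
      sdiff_eq_left.2 hdisjB] at hle
    linarith
  · rintro ⟨hT, hTmin⟩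
    have hT := (hlift T hBT hTR).1 hT
    refine ⟨hT, fun S hS => ?_⟩
    calc setWeight w T = setWeight w B + setWeight w' (T \ B) := hsplit T hT hBT hTR
      _ ≤ setWeight w B + setWeight w' (T₀ \ B) :=
        add_le_add_right (hTmin _ ((hlift T₀ hBT₀ hT₀R).2 hT₀.1)) _
      _ = setWeight w T₀ := (hsplit T₀ hT₀.1 hBT₀ hT₀R).symm
      _ ≤ setWeight w S := hT₀.2 S hS

end UncertaintyMatroid

/-- Characterization of uniformly optimal bases: they contain all blue uncertain elements,
avoid all red uncertain elements, and their certain part is a minimum weight basis of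
the certain weighted matroid `M / B \ R`. -/
theorem uob_characterization (M : Matroid α) (A : α → Set ℝ)
    (hE : M.E.Finite) (hA : IsAreaFun M A)
    (hex : ∃ T, IsUOB M A T)
    (B R : Set α)
    (hB : B = {e ∈ M.E | ¬ Certain A e ∧ Blue M A e})
    (hR : R = {e ∈ M.E | ¬ Certain A e ∧ Red M A e})
    (hcert : ∀ e ∈ M.E, e ∉ B ∪ R → Certain A e)
    (wc : α → ℝ) (hwc : ∀ e ∈ M.E, Certain A e → A e = {wc e})
    (T : Set α) :
    IsUOB M A T ↔
      B ⊆ T ∧ T ∩ R = ∅ ∧ IsMinBasis ((M.con B).del R) wc (T \ B) := by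
  obtain ⟨T₀, hT₀⟩ := hex
  obtain ⟨w₀, hw₀⟩ := hA.exists_realization_s1
  have hblue (T : Set α) (hT : IsUOB M A T) : B ⊆ T := hB ▸ fun e he =>
    hT.mem_of_blue hE hA he.1 he.2.1 he.2.2
  have hred (T : Set α) (hT : IsUOB M A T) : Disjoint T R := hR ▸ disjoint_right.2 fun e he =>
    hT.notMem_of_red hE hA he.1 he.2.1 he.2.2
  have hcertain (w : α → ℝ) (hw : Realization M A w) (e : α) (he : e ∈ M.E) (heB : e ∉ B)
      (heR : e ∉ R) : w e = wc e := by
    simpa [hwc e he (hcert e he (by simp [heB, heR]))] using hw e he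
  have hreduce (w : α → ℝ) (hw : Realization M A w) {T : Set α} (hBT : B ⊆ T)
      (hTR : Disjoint T R) := isMinBasis_iff_isMinBasis_contract_delete hE
    (hR ▸ sep_subset _ _) (hcertain w hw) (hT₀ w hw) (hblue T₀ hT₀) (hred T₀ hT₀) hBT hTR
  constructor
  · intro hT
    exact ⟨hblue T hT, disjoint_iff_inter_eq_empty.1 (hred T hT),
      (hreduce w₀ hw₀ (hblue T hT) (hred T hT)).1 (hT w₀ hw₀)⟩
  · rintro ⟨hBT, hTR, hmin⟩ w hw
    exact (hreduce w hw hBT (disjoint_iff_inter_eq_empty.2 hTR)).2 hmin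
end

section
/- Let (M, 𝒜) be an uncertainty matroid on a finite ground set E such that for every e ∈ E, the area 𝒜(e) is an interval of reals (of any type: open, closed, half-open, or a singleton). Then the set S of all elements that are uncertain and uncolored is a feasible query, and S ⊆ F for every feasible query F; in particular S is the unique minimum-size feasible query. -/
open Matroid

variable {α : Type*}

/-- `B` is a revelation of `X` in `(M, A)`: on `X` each area is replaced by a singleton
subset of itself, and outside `X` areas are unchanged. -/
def IsRevelation (M : Matroid α) (A : α → Set ℝ) (X : Set α) (B : α → Set ℝ) : Prop :=
  (∀ e ∈ X, ∃ r ∈ A e, B e = {r}) ∧ ∀ e ∉ X, B e = A e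

/-- `F ⊆ E` is a feasible query if every revelation of `F` admits a uniformly optimal basis. -/
def FeasibleQuery (M : Matroid α) (A : α → Set ℝ) (F : Set α) : Prop :=
  F ⊆ M.E ∧ ∀ B, IsRevelation M A F B → ∃ T, IsUOB M B T


/-!
Write `L_e = inf A e` and `U_e = sup A e`. Exchange arguments characterise the colors by
closures: `e` is blue iff `e ∉ cl {f ≠ e | L_f < U_e}`, and red iff `e ∈ cl {f ≠ e | U_f ≤ L_e}`.

If every element is certain or colored, take a basis `T` of minimum `U`-weight and, among those,
of minimum `L`-weight. The color of `y` forces `U_x ≤ L_y` for every exchange `T - x + y`, so `T`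
is locally, hence globally, optimal for every realization. Revealing the uncertain uncolored
elements leaves every element certain or colored, since it only shrinks the set of realizations.

Conversely, let `e` be uncertain and uncolored and let the query `F` avoid `e`. Reveal each
`f ∈ F` at a point below `U_e` if `L_f < U_e` and above `L_e` if `L_e < U_f`; as `A f` is an
interval and `L_e < U_e`, one point does both. A uniformly optimal basis of the revealed instance
colors `e` there, and by the closure characterisations this color carries back to `A`.
-/

open Set

namespace Matroid

variable {M : Matroid α} {T B X Y : Set α} {e f x y : α}

lemma exists_notMem_closure_of_mem_closure (hX : e ∈ M.closure X) (hY : e ∉ M.closure Y) :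
    ∃ f ∈ X, f ∉ M.closure Y := by
  by_contra! h
  exact hY (M.closure_subset_closure_of_subset_closure h hX)

lemma IsBase.mem_closure_setOf_isBase_exchange (hT : M.IsBase T) (he : e ∈ M.E) (heT : e ∉ T) :
    e ∈ M.closure {f ∈ T | M.IsBase (insert e (T \ {f}))} := by
  have hC := hT.fundCircuit_isCircuit he heT
  refine M.closure_subset_closure (fun f hf ↦ ?_)
    (hC.mem_closure_sdiff_singleton_of_mem (M.mem_fundCircuit e T))
  have hfe : f ≠ e := hf.2
  have hfT : f ∈ T := (M.fundCircuit_subset_insert e T hf.1).resolve_left hfe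
  have hind := (hT.indep.mem_fundCircuit_iff (by rwa [hT.closure_eq]) heT).1 hf.1
  refine ⟨hfT, ?_⟩
  rw [insert_sdiff_singleton_comm hfe.symm]
  exact hT.exchange_isBase_of_indep' hfT heT hind

lemma IsBase.exists_exchange_of_mem_closure_s3 (hT : M.IsBase T) (hx : x ∈ T) (hXE : X ⊆ M.E)
    (hxX : x ∉ X) (hyX : y ∈ M.closure X) (hy : y ∉ M.closure (T \ {x})) :
    ∃ f ∈ X, f ∉ T ∧ M.IsBase (insert f (T \ {x})) := by
  obtain ⟨f, hfX, hfcl⟩ := exists_notMem_closure_of_mem_closure hyX hy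
  have hfT : f ∉ T := fun hfT ↦
    hfcl (M.mem_closure_of_mem' ⟨hfT, fun h ↦ hxX (h ▸ hfX)⟩ (hXE hfX))
  exact ⟨f, hfX, hfT, hT.exchange_base_of_notMem_closure hx hfcl (hXE hfX)⟩

lemma IsBase.exists_symm_exchange (hT : M.IsBase T) (hB : M.IsBase B) (hf : f ∈ B \ T) :
    ∃ e ∈ T \ B, M.IsBase (insert f (T \ {e})) ∧ M.IsBase (insert e (B \ {f})) := by
  obtain ⟨e, ⟨heT, hTe⟩, heB, hBe⟩ := hB.exists_exchange_of_mem_closure_s3 hf.1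
    (fun g hg ↦ hT.subset_ground hg.1) (fun h ↦ hf.2 h.1)
    (hT.mem_closure_setOf_isBase_exchange (hB.subset_ground hf.1) hf.2)
    (hB.indep.notMem_closure_sdiff_of_mem hf.1)
  exact ⟨e, ⟨heT, heB⟩, hTe, hBe⟩

end Matroid

section Weight

variable {M : Matroid α} {w : α → ℝ} {T : Set α} {e x y : α}

lemma setWeight_insert_sdiff (w : α → ℝ) (hT : T.Finite) (hx : x ∈ T) (hy : y ∉ T) :
    setWeight w (insert y (T \ {x})) = setWeight w T - w x + w y := by
  have hT' : setWeight w T = w x + setWeight w (T \ {x}) := by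
    conv_lhs => rw [← insert_eq_of_mem hx, ← insert_sdiff_singleton]
    exact finsum_mem_insert w (fun h ↦ h.2 rfl) hT.sdiff
  rw [setWeight, finsum_mem_insert w (fun h ↦ hy h.1) hT.sdiff, ← setWeight, hT']
  ring

lemma IsMinBasis.le_of_isBase_exchange (hE : M.E.Finite) (hT : IsMinBasis M w T) (hx : x ∈ T)
    (hy : y ∉ T) (hB : M.IsBase (insert y (T \ {x}))) : w x ≤ w y := by
  have h := hT.2 _ hB
  rw [setWeight_insert_sdiff w (hE.subset hT.1.subset_ground) hx hy] at h
  linarith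

lemma IsMinBasis.exchange_of_le (hE : M.E.Finite) (hT : IsMinBasis M w T) (hx : x ∈ T)
    (hy : y ∉ T) (hB : M.IsBase (insert y (T \ {x}))) (hyx : w y ≤ w x) :
    IsMinBasis M w (insert y (T \ {x})) := by
  refine ⟨hB, fun B' hB' ↦ ?_⟩
  rw [setWeight_insert_sdiff w (hE.subset hT.1.subset_ground) hx hy]
  linarith [hT.2 B' hB']

lemma isMinBasis_of_forall_exchange (hE : M.E.Finite) (hT : M.IsBase T)
    (h : ∀ x ∈ T, ∀ y ∉ T, M.IsBase (insert y (T \ {x})) → w x ≤ w y) :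
    IsMinBasis M w T := by
  refine ⟨hT, fun B hB ↦ ?_⟩
  induction hn : (B \ T).ncard using Nat.strong_induction_on generalizing B with
  | _ n ih =>
    have hBfin : B.Finite := hE.subset hB.subset_ground
    obtain hBT | ⟨f, hf⟩ := (B \ T).eq_empty_or_nonempty
    · rw [hB.eq_of_subset_isBase hT (sdiff_eq_empty.1 hBT)]
    obtain ⟨e, ⟨heT, heB⟩, hTe, hBe⟩ := hT.exists_symm_exchange hB hf
    have hcard : ((insert e (B \ {f})) \ T).ncard < n := by
      rw [insert_sdiff_of_mem _ heT, sdiff_sdiff_comm, ← hn]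
      exact ncard_sdiff_singleton_lt_of_mem hf hBfin.sdiff
    have hle := ih _ hcard _ hBe rfl
    rw [setWeight_insert_sdiff w hBfin hf.1 heB] at hle
    linarith [h e heT f hf.2 hTe]

lemma exists_isMinBasis_min_setWeight (hE : M.E.Finite) (w v : α → ℝ) :
    ∃ T, IsMinBasis M w T ∧ ∀ T', IsMinBasis M w T' → setWeight v T ≤ setWeight v T' := by
  have hfin : {B | M.IsBase B}.Finite :=
    hE.finite_subsets.subset fun B hB ↦ hB.subset_ground
  obtain ⟨B₀, hB₀, hB₀min⟩ := exists_min_image _ (setWeight w) hfin M.exists_isBase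
  obtain ⟨T, hT, hTmin⟩ := exists_min_image {T | IsMinBasis M w T} (setWeight v)
    (hfin.subset fun T hT ↦ hT.1) ⟨B₀, hB₀, hB₀min⟩
  exact ⟨T, hT, hTmin⟩

lemma exists_isMinBasis_mem_iff (hE : M.E.Finite) (he : e ∈ M.E) :
    (∃ T, IsMinBasis M w T ∧ e ∈ T) ↔ e ∉ M.closure {f ∈ M.E | w f < w e} := by
  constructor
  · rintro ⟨T, hT, heT⟩ hecl
    obtain ⟨f, hf, hfT, hTf⟩ := hT.1.exists_exchange_of_mem_closure_s3 heT (sep_subset _ _)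
      (fun h ↦ h.2.false) hecl (hT.1.indep.notMem_closure_sdiff_of_mem heT)
    exact (hT.le_of_isBase_exchange hE heT hfT hTf).not_gt hf.2
  · intro hecl
    obtain ⟨T, hT, -⟩ := exists_isMinBasis_min_setWeight hE w w
    by_cases heT : e ∈ T
    · exact ⟨T, hT, heT⟩
    obtain ⟨f, ⟨hfT, hTf⟩, hfcl⟩ := exists_notMem_closure_of_mem_closure
      (hT.1.mem_closure_setOf_isBase_exchange he heT) hecl
    have hfE := hT.1.subset_ground hfT
    have hwf : w e ≤ w f := not_lt.1 fun h ↦ hfcl (M.mem_closure_of_mem' ⟨hfE, h⟩)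
    exact ⟨_, hT.exchange_of_le hE hfT heT hTf hwf, mem_insert _ _⟩

lemma exists_isMinBasis_notMem_iff (hE : M.E.Finite) (he : e ∈ M.E) :
    (∃ T, IsMinBasis M w T ∧ e ∉ T) ↔ e ∈ M.closure {f ∈ M.E | f ≠ e ∧ w f ≤ w e} := by
  constructor
  · rintro ⟨T, hT, heT⟩
    refine M.closure_subset_closure (fun f hf ↦ ?_)
      (hT.1.mem_closure_setOf_isBase_exchange he heT)
    obtain ⟨hfT, hTf⟩ := hf
    exact ⟨hT.1.subset_ground hfT, fun h ↦ heT (h ▸ hfT),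
      hT.le_of_isBase_exchange hE hfT heT hTf⟩
  · intro hecl
    obtain ⟨T, hT, -⟩ := exists_isMinBasis_min_setWeight hE w w
    by_cases heT : e ∈ T
    · obtain ⟨f, hf, hfT, hTf⟩ := hT.1.exists_exchange_of_mem_closure_s3 heT (sep_subset _ _)
        (fun h ↦ h.2.1 rfl) hecl (hT.1.indep.notMem_closure_sdiff_of_mem heT)
      refine ⟨_, hT.exchange_of_le hE heT hfT hTf hf.2.2, ?_⟩
      rintro (h | h)
      exacts [hf.2.1 h.symm, h.2 rfl]
    · exact ⟨T, hT, heT⟩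

end Weight

lemma Set.Finite.exists_mem_forall_lt_of_lt_csSup {ι β : Type*}
    [ConditionallyCompleteLinearOrder β] {s : Set ι} (hs : s.Finite) {t : Set β}
    (ht : t.Nonempty) {g : ι → β} (h : ∀ i ∈ s, g i < sSup t) : ∃ a ∈ t, ∀ i ∈ s, g i < a := by
  obtain rfl | hne := s.eq_empty_or_nonempty
  · exact ⟨ht.some, ht.some_mem, by simp⟩
  obtain ⟨i₀, hi₀, hmax⟩ := exists_max_image s g hs hne
  obtain ⟨a, ha, hlt⟩ := exists_lt_of_lt_csSup ht (h i₀ hi₀)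
  exact ⟨a, ha, fun i hi ↦ (hmax i hi).trans_lt hlt⟩

lemma Set.Finite.exists_mem_forall_gt_of_csInf_lt {ι β : Type*}
    [ConditionallyCompleteLinearOrder β] {s : Set ι} (hs : s.Finite) {t : Set β}
    (ht : t.Nonempty) {g : ι → β} (h : ∀ i ∈ s, sInf t < g i) : ∃ a ∈ t, ∀ i ∈ s, a < g i :=
  hs.exists_mem_forall_lt_of_lt_csSup (β := βᵒᵈ) ht h

noncomputable def lower (A : α → Set ℝ) (e : α) : ℝ := sInf (A e)

noncomputable def upper (A : α → Set ℝ) (e : α) : ℝ := sSup (A e)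

def possiblyBelow (M : Matroid α) (A : α → Set ℝ) (e : α) : Set α :=
  {f ∈ M.E | f ≠ e ∧ lower A f < upper A e}

def surelyAtMost (M : Matroid α) (A : α → Set ℝ) (e : α) : Set α :=
  {f ∈ M.E | f ≠ e ∧ upper A f ≤ lower A e}

section Areas

variable {M : Matroid α} {A : α → Set ℝ} {e : α}

lemma IsAreaFun.lower_le (hA : IsAreaFun M A) (he : e ∈ M.E) {a : ℝ} (ha : a ∈ A e) :
    lower A e ≤ a :=
  csInf_le (hA e he).2.1 ha

lemma IsAreaFun.le_upper (hA : IsAreaFun M A) (he : e ∈ M.E) {a : ℝ} (ha : a ∈ A e) :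
    a ≤ upper A e :=
  le_csSup (hA e he).2.2 ha

lemma IsAreaFun.lower_le_upper (hA : IsAreaFun M A) (he : e ∈ M.E) : lower A e ≤ upper A e :=
  (hA.lower_le he (hA e he).1.some_mem).trans (hA.le_upper he (hA e he).1.some_mem)

lemma IsAreaFun.certain_iff (hA : IsAreaFun M A) (he : e ∈ M.E) :
    Certain A e ↔ lower A e = upper A e := by
  refine ⟨fun ⟨r, hr⟩ ↦ by simp [lower, upper, hr], fun h ↦ ⟨lower A e, ?_⟩⟩
  refine eq_singleton_iff_nonempty_unique_mem.2 ⟨(hA e he).1, fun a ha ↦ ?_⟩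
  exact le_antisymm (h ▸ hA.le_upper he ha) (hA.lower_le he ha)

lemma exists_realization_forall (P : α → ℝ → Prop) (h : ∀ e ∈ M.E, ∃ r ∈ A e, P e r) :
    ∃ w, Realization M A w ∧ ∀ e ∈ M.E, P e (w e) := by
  choose! w hw hP using h
  exact ⟨w, hw, hP⟩

lemma exists_realization_lt (hE : M.E.Finite) (hA : IsAreaFun M A) (he : e ∈ M.E) :
    ∃ w, Realization M A w ∧ ∀ f ∈ possiblyBelow M A e, w f < w e := by
  obtain ⟨a, ha, hlt⟩ := (hE.subset (sep_subset _ _)).exists_mem_forall_lt_of_lt_csSup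
    (hA e he).1 fun f (hf : f ∈ possiblyBelow M A e) ↦ hf.2.2
  obtain ⟨w, hw, hwa⟩ := exists_realization_forall (M := M) (A := A)
    (fun f r ↦ (f = e → r = a) ∧ (f ∈ possiblyBelow M A e → r < a)) fun f hf ↦ by
      by_cases hfe : f = e
      · exact ⟨a, hfe ▸ ha, fun _ ↦ rfl, fun h ↦ (h.2.1 hfe).elim⟩
      by_cases hfX : f ∈ possiblyBelow M A e
      · obtain ⟨r, hr, hra⟩ := exists_lt_of_csInf_lt (hA f hf).1 (hlt f hfX)
        exact ⟨r, hr, fun h ↦ (hfe h).elim, fun _ ↦ hra⟩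
      · exact ⟨_, (hA f hf).1.some_mem, fun h ↦ (hfe h).elim, fun h ↦ (hfX h).elim⟩
  exact ⟨w, hw, fun f hf ↦ ((hwa f hf.1).2 hf).trans_eq ((hwa e he).1 rfl).symm⟩

lemma exists_realization_gt (hE : M.E.Finite) (hA : IsAreaFun M A) (he : e ∈ M.E) :
    ∃ w, Realization M A w ∧
      ∀ f ∈ M.E, f ≠ e → lower A e < upper A f → w e < w f := by
  set Z := {f ∈ M.E | f ≠ e ∧ lower A e < upper A f}
  obtain ⟨b, hb, hlt⟩ := (hE.subset (sep_subset _ _)).exists_mem_forall_gt_of_csInf_lt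
    (hA e he).1 fun f (hf : f ∈ Z) ↦ hf.2.2
  obtain ⟨w, hw, hwb⟩ := exists_realization_forall (M := M) (A := A)
    (fun f r ↦ (f = e → r = b) ∧ (f ∈ Z → b < r)) fun f hf ↦ by
      by_cases hfe : f = e
      · exact ⟨b, hfe ▸ hb, fun _ ↦ rfl, fun h ↦ (h.2.1 hfe).elim⟩
      by_cases hfZ : f ∈ Z
      · obtain ⟨r, hr, hbr⟩ := exists_lt_of_lt_csSup (hA f hf).1 (hlt f hfZ)
        exact ⟨r, hr, fun h ↦ (hfe h).elim, fun _ ↦ hbr⟩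
      · exact ⟨_, (hA f hf).1.some_mem, fun h ↦ (hfe h).elim, fun h ↦ (hfZ h).elim⟩
  exact ⟨w, hw, fun f hf hfe hef ↦
    ((hwb e he).1 rfl).trans_lt ((hwb f hf).2 ⟨hf, hfe, hef⟩)⟩

lemma IsAreaFun.blue_iff (hE : M.E.Finite) (hA : IsAreaFun M A) (he : e ∈ M.E) :
    Blue M A e ↔ e ∉ M.closure (possiblyBelow M A e) := by
  constructor
  · intro hb hecl
    obtain ⟨w, hw, hwX⟩ := exists_realization_lt hE hA he
    exact (exists_isMinBasis_mem_iff hE he).1 (hb w hw)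
      (M.closure_subset_closure (fun f hf ↦ mem_sep hf.1 (hwX f hf)) hecl)
  · intro hecl w hw
    refine (exists_isMinBasis_mem_iff hE he).2 fun h ↦ hecl (M.closure_subset_closure ?_ h)
    rintro f ⟨hfE, hfw⟩
    exact ⟨hfE, fun h ↦ (h ▸ hfw).false,
      ((hA.lower_le hfE (hw f hfE)).trans_lt hfw).trans_le (hA.le_upper he (hw e he))⟩

lemma IsAreaFun.red_iff (hE : M.E.Finite) (hA : IsAreaFun M A) (he : e ∈ M.E) :
    Red M A e ↔ e ∈ M.closure (surelyAtMost M A e) := by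
  constructor
  · intro hr
    obtain ⟨w, hw, hwZ⟩ := exists_realization_gt hE hA he
    refine M.closure_subset_closure ?_ ((exists_isMinBasis_notMem_iff hE he).1 (hr w hw))
    rintro f ⟨hfE, hfe, hfw⟩
    exact ⟨hfE, hfe, not_lt.1 fun h ↦ (hwZ f hfE hfe h).not_ge hfw⟩
  · intro hecl w hw
    refine (exists_isMinBasis_notMem_iff hE he).2 (M.closure_subset_closure ?_ hecl)
    rintro f ⟨hfE, hfe, hfle⟩
    exact ⟨hfE, hfe,
      (hA.le_upper hfE (hw f hfE)).trans (hfle.trans (hA.lower_le he (hw e he)))⟩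

end Areas

section UniformlyOptimal

variable {M : Matroid α} {A : α → Set ℝ} {T : Set α} {x y : α}

lemma isUOB_of_forall_exchange (hE : M.E.Finite) (hA : IsAreaFun M A) (hT : M.IsBase T)
    (h : ∀ x ∈ T, ∀ y ∉ T, M.IsBase (insert y (T \ {x})) → upper A x ≤ lower A y) :
    IsUOB M A T := by
  intro w hw
  refine isMinBasis_of_forall_exchange hE hT fun x hx y hyT hB ↦ ?_
  have hxE := hT.subset_ground hx
  have hyE := hB.subset_ground (mem_insert y _)
  exact (hA.le_upper hxE (hw x hxE)).trans
    ((h x hx y hyT hB).trans (hA.lower_le hyE (hw y hyE)))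

lemma upper_le_lower_of_notMem_closure_possiblyBelow (hE : M.E.Finite) (hA : IsAreaFun M A)
    (hT : IsMinBasis M (upper A) T)
    (hTlower : ∀ T', IsMinBasis M (upper A) T' → setWeight (lower A) T ≤ setWeight (lower A) T')
    (hy : y ∈ M.E) (hyT : y ∉ T) (hblue : y ∉ M.closure (possiblyBelow M A y)) :
    upper A y ≤ lower A y := by
  obtain ⟨g, ⟨hgT, hTg⟩, hgcl⟩ := exists_notMem_closure_of_mem_closure
    (hT.1.mem_closure_setOf_isBase_exchange hy hyT) hblue
  have hgE := hT.1.subset_ground hgT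
  have hyg : upper A y ≤ lower A g := not_lt.1 fun h ↦
    hgcl (M.mem_closure_of_mem' ⟨hgE, fun h' ↦ hyT (h' ▸ hgT), h⟩)
  -- exchanging `g` for `y` keeps the `upper`-weight minimal, so it cannot lower the `lower`-weight
  have hlower := hTlower _ (hT.exchange_of_le hE hgT hyT hTg
    (hyg.trans (hA.lower_le_upper hgE)))
  rw [setWeight_insert_sdiff _ (hE.subset hT.1.subset_ground) hgT hyT] at hlower
  linarith

lemma upper_le_lower_of_mem_closure_surelyAtMost (hE : M.E.Finite)
    (hT : IsMinBasis M (upper A) T) (hx : x ∈ T) (hyT : y ∉ T)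
    (hB : M.IsBase (insert y (T \ {x}))) (hred : y ∈ M.closure (surelyAtMost M A y)) :
    upper A x ≤ lower A y := by
  by_contra! hlt
  have hy : y ∉ M.closure (T \ {x}) := by
    simpa [insert_sdiff_self_of_notMem (fun h : y ∈ T \ {x} ↦ hyT h.1)]
      using hB.indep.notMem_closure_sdiff_of_mem (mem_insert y _)
  obtain ⟨g, hg, hgT, hTg⟩ := hT.1.exists_exchange_of_mem_closure_s3 hx (sep_subset _ _)
    (fun h ↦ (h.2.2.trans_lt hlt).false) hred hy
  exact hlt.not_ge ((hT.le_of_isBase_exchange hE hx hgT hTg).trans hg.2.2)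

lemma exists_isUOB_of_forall_certain_or_colored (hE : M.E.Finite) (hA : IsAreaFun M A)
    (h : ∀ y ∈ M.E, Certain A y ∨ Colored M A y) : ∃ T, IsUOB M A T := by
  obtain ⟨T, hT, hTlower⟩ := exists_isMinBasis_min_setWeight hE (upper A) (lower A)
  refine ⟨T, isUOB_of_forall_exchange hE hA hT.1 fun x hx y hyT hB ↦ ?_⟩
  have hyE := hB.subset_ground (mem_insert y _)
  have hxy := hT.le_of_isBase_exchange hE hx hyT hB
  rcases h y hyE with hcert | hblue | hred
  · exact hxy.trans ((hA.certain_iff hyE).1 hcert).ge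
  · exact hxy.trans (upper_le_lower_of_notMem_closure_possiblyBelow hE hA hT hTlower hyE hyT
      ((hA.blue_iff hE hyE).1 hblue))
  · exact upper_le_lower_of_mem_closure_surelyAtMost hE hT hx hyT hB
      ((hA.red_iff hE hyE).1 hred)

end UniformlyOptimal

lemma Set.OrdConnected.exists_mem_lt_and_gt {β : Type*} [ConditionallyCompleteLinearOrder β]
    [DenselyOrdered β] {s : Set β} (hs : s.OrdConnected) (hne : s.Nonempty) {a b : β}
    (hab : a < b) : ∃ c ∈ s, (sInf s < b → c < b) ∧ (a < sSup s → a < c) := by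
  obtain ⟨c₁, hc₁, hc₁b⟩ : ∃ c ∈ s, sInf s < b → c < b := by
    by_cases h : sInf s < b
    · obtain ⟨c, hc, hcb⟩ := exists_lt_of_csInf_lt hne h
      exact ⟨c, hc, fun _ ↦ hcb⟩
    · exact ⟨hne.some, hne.some_mem, fun h' ↦ (h h').elim⟩
  obtain ⟨c₂, hc₂, hac₂⟩ : ∃ c ∈ s, a < sSup s → a < c := by
    by_cases h : a < sSup s
    · obtain ⟨c, hc, hac⟩ := exists_lt_of_lt_csSup hne h
      exact ⟨c, hc, fun _ ↦ hac⟩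
    · exact ⟨hne.some, hne.some_mem, fun h' ↦ (h h').elim⟩
  by_cases h₁ : a < c₁
  · exact ⟨c₁, hc₁, hc₁b, fun _ ↦ h₁⟩
  by_cases h₂ : c₂ < b
  · exact ⟨c₂, hc₂, fun _ ↦ h₂, hac₂⟩
  obtain ⟨m, ham, hmb⟩ := exists_between hab
  exact ⟨m, hs.out hc₁ hc₂ ⟨(not_lt.1 h₁).trans ham.le, hmb.le.trans (not_lt.1 h₂)⟩,
    fun _ ↦ hmb, fun _ ↦ ham⟩

section Revelation

variable {M : Matroid α} {A B : α → Set ℝ} {F : Set α} {r w : α → ℝ} {e : α}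

lemma IsRevelation.isAreaFun (hB : IsRevelation M A F B) (hA : IsAreaFun M A) :
    IsAreaFun M B := by
  intro e he
  by_cases heF : e ∈ F
  · obtain ⟨r, -, hr⟩ := hB.1 e heF
    simp [hr]
  · rw [hB.2 e heF]
    exact hA e he

lemma IsRevelation.realization (hB : IsRevelation M A F B) (hw : Realization M B w) :
    Realization M A w := by
  intro e he
  by_cases heF : e ∈ F
  · obtain ⟨r, hr, hBr⟩ := hB.1 e heF
    have hwe : w e = r := by simpa [hBr] using hw e he
    rwa [hwe]
  · exact hB.2 e heF ▸ hw e he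

lemma IsRevelation.colored (hB : IsRevelation M A F B) (h : Colored M A e) : Colored M B e :=
  h.imp (fun hb w hw ↦ hb w (hB.realization hw)) (fun hr w hw ↦ hr w (hB.realization hw))

lemma isRevelation_piecewise [DecidablePred (· ∈ F)] (hr : ∀ f ∈ F, r f ∈ A f) :
    IsRevelation M A F (F.piecewise (fun f ↦ {r f}) A) :=
  ⟨fun f hf ↦ ⟨r f, hr f hf, piecewise_eq_of_mem _ _ _ hf⟩,
    fun _ hf ↦ piecewise_eq_of_notMem _ _ _ hf⟩

lemma blue_of_blue_piecewise [DecidablePred (· ∈ F)] (hE : M.E.Finite) (hA : IsAreaFun M A)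
    (he : e ∈ M.E) (heF : e ∉ F) (hr : ∀ f ∈ F, r f ∈ A f)
    (hlt : ∀ f ∈ F, lower A f < upper A e → r f < upper A e)
    (hb : Blue M (F.piecewise (fun f ↦ {r f}) A) e) : Blue M A e := by
  have hB := (isRevelation_piecewise (M := M) hr).isAreaFun hA
  rw [hB.blue_iff hE he] at hb
  refine (hA.blue_iff hE he).2 fun hecl ↦ hb (M.closure_subset_closure (fun f hf ↦ ?_) hecl)
  obtain ⟨hfE, hfe, hflt⟩ := hf
  refine ⟨hfE, hfe, ?_⟩
  by_cases hfF : f ∈ F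
  · simpa [lower, upper, hfF, heF] using hlt f hfF hflt
  · simpa [lower, upper, hfF, heF] using hflt

lemma red_of_red_piecewise [DecidablePred (· ∈ F)] (hE : M.E.Finite) (hA : IsAreaFun M A)
    (he : e ∈ M.E) (heF : e ∉ F) (hr : ∀ f ∈ F, r f ∈ A f)
    (hgt : ∀ f ∈ F, lower A e < upper A f → lower A e < r f)
    (hred : Red M (F.piecewise (fun f ↦ {r f}) A) e) : Red M A e := by
  have hB := (isRevelation_piecewise (M := M) hr).isAreaFun hA
  rw [hB.red_iff hE he] at hred
  refine (hA.red_iff hE he).2 (M.closure_subset_closure (fun f hf ↦ ?_) hred)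
  obtain ⟨hfE, hfe, hfle⟩ := hf
  refine ⟨hfE, hfe, not_lt.1 fun hlt ↦ hfle.not_gt ?_⟩
  by_cases hfF : f ∈ F
  · simpa [lower, upper, hfF, heF] using hgt f hfF hlt
  · simpa [lower, upper, hfF, heF] using hlt

end Revelation

section FeasibleQuery

variable {M : Matroid α} {A : α → Set ℝ} {F : Set α} {e : α}

lemma feasibleQuery_of_forall_certain_or_colored (hE : M.E.Finite) (hA : IsAreaFun M A)
    (hFE : F ⊆ M.E) (hF : ∀ e ∈ M.E, e ∉ F → Certain A e ∨ Colored M A e) :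
    FeasibleQuery M A F := by
  refine ⟨hFE, fun B hB ↦
    exists_isUOB_of_forall_certain_or_colored hE (hB.isAreaFun hA) fun e he ↦ ?_⟩
  by_cases heF : e ∈ F
  · obtain ⟨r, -, hr⟩ := hB.1 e heF
    exact Or.inl ⟨r, hr⟩
  · exact (hF e he heF).imp (fun ⟨r, hr⟩ ↦ ⟨r, (hB.2 e heF).trans hr⟩) hB.colored

lemma mem_of_feasibleQuery (hE : M.E.Finite) (hA : IsAreaFun M A)
    (hint : ∀ e ∈ M.E, (A e).OrdConnected) (hF : FeasibleQuery M A F) (he : e ∈ M.E)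
    (hunc : ¬ Certain A e) (hcol : ¬ Colored M A e) : e ∈ F := by
  classical
  by_contra heF
  have hlt : lower A e < upper A e :=
    (hA.lower_le_upper he).lt_of_ne (mt (hA.certain_iff he).2 hunc)
  choose! r hr hrlt hrgt using fun f (hf : f ∈ F) ↦
    (hint f (hF.1 hf)).exists_mem_lt_and_gt (hA f (hF.1 hf)).1 hlt
  obtain ⟨T, hT⟩ := hF.2 _ (isRevelation_piecewise hr)
  by_cases heT : e ∈ T
  · exact hcol (Or.inl (blue_of_blue_piecewise hE hA he heF hr hrlt
      fun w hw ↦ ⟨T, hT w hw, heT⟩))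
  · exact hcol (Or.inr (red_of_red_piecewise hE hA he heF hr hrgt
      fun w hw ↦ ⟨T, hT w hw, heT⟩))

end FeasibleQuery

/-- With interval areas, the set of uncertain uncolored elements is the unique
minimum-size feasible query. -/
theorem interval_unique_min_feasible (M : Matroid α) (A : α → Set ℝ)
    (hE : M.E.Finite) (hA : IsAreaFun M A)
    (hint : ∀ e ∈ M.E, (A e).OrdConnected)
    (S : Set α) (hS : S = {e ∈ M.E | ¬ Certain A e ∧ ¬ Colored M A e}) :
    FeasibleQuery M A S ∧ (∀ F, FeasibleQuery M A F → S ⊆ F) ∧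
      (∀ F, FeasibleQuery M A F → F.ncard ≤ S.ncard → F = S) := by
  subst hS
  have hsub : ∀ F, FeasibleQuery M A F → {e ∈ M.E | ¬ Certain A e ∧ ¬ Colored M A e} ⊆ F :=
    fun F hF e ⟨he, hunc, hcol⟩ ↦ mem_of_feasibleQuery hE hA hint hF he hunc hcol
  refine ⟨feasibleQuery_of_forall_certain_or_colored hE hA (sep_subset _ _) fun e he heS ↦ ?_,
    hsub, fun F hF hcard ↦ (eq_of_subset_of_ncard_le (hsub F hF) hcard (hE.subset hF.1)).symm⟩
  by_contra! h
  exact heS ⟨he, h⟩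
end

section
/- Let (M, 𝒜) be an uncertainty matroid on a finite ground set E and let e ∈ E be red. Then T ⊆ E − e is a uniformly optimal basis of (M\e, 𝒜|_{E−e}) if and only if T is a uniformly optimal basis of (M, 𝒜). -/
open Matroid

variable {α : Type*}

/-!
A red element `e` is never a coloop, so the bases of `M.del {e}` are exactly the bases of `M`
avoiding `e`. For a realization `w` of `M`, a `w`-basis of `M` avoiding `e` is then a common
lower bound of both minimisation problems, so a basis avoiding `e` is a `w`-basis of `M.del {e}`
iff it is one of `M`. A realization of `M.del {e}` extends to one of `M` by giving `e` any value
in its (nonempty) area, which changes no weight of a set avoiding `e`.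
-/

open Set

section

variable {M : Matroid α} {A : α → Set ℝ} {w w' : α → ℝ} {D T B₀ : Set α}

lemma Realization.del (hw : Realization M A w) (D : Set α) : Realization (M.del D) A w :=
  fun f hf ↦ hw f hf.1

lemma Realization.update_of_del_singleton [DecidableEq α] {e : α} {a : ℝ}
    (hw : Realization (M.del {e}) A w) (ha : a ∈ A e) : Realization M A (Function.update w e a) := by
  intro f hf
  obtain rfl | hfe := eq_or_ne f e
  · simpa using ha
  · simpa [hfe] using hw f ⟨hf, hfe⟩

lemma isMinBasis_congr (hww' : EqOn w w' M.E) : IsMinBasis M w T ↔ IsMinBasis M w' T := by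
  have hweight : ∀ B, M.IsBase B → setWeight w B = setWeight w' B :=
    fun B hB ↦ finsum_mem_congr rfl fun f hf ↦ hww' (hB.subset_ground hf)
  refine and_congr_right fun hT ↦ forall₂_congr fun B hB ↦ ?_
  rw [hweight T hT, hweight B hB]

lemma isMinBasis_del_iff_of_disjoint (hB₀ : IsMinBasis M w B₀) (hB₀D : Disjoint B₀ D)
    (hDE : D ⊆ M.E) : IsMinBasis (M.del D) w T ↔ IsMinBasis M w T ∧ Disjoint T D := by
  have hD : M.Coindep D :=
    coindep_iff_subset_compl_isBase.2 ⟨B₀, hB₀.1, subset_sdiff.2 ⟨hDE, hB₀D.symm⟩⟩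
  have hbase : ∀ B, (M.del D).IsBase B ↔ M.IsBase B ∧ Disjoint B D :=
    fun _ ↦ hD.delete_isBase_iff
  simp only [IsMinBasis, hbase]
  constructor
  · rintro ⟨⟨hT, hTD⟩, hmin⟩
    exact ⟨⟨hT, fun B hB ↦ (hmin B₀ ⟨hB₀.1, hB₀D⟩).trans (hB₀.2 B hB)⟩, hTD⟩
  · rintro ⟨⟨hT, hmin⟩, hTD⟩
    exact ⟨⟨hT, hTD⟩, fun B hB ↦ hmin B hB.1⟩

end

theorem red_delete_uob_general (M : Matroid α) (A : α → Set ℝ)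
    (hA : IsAreaFun M A)
    (e : α) (he : e ∈ M.E) (hred : Red M A e)
    (T : Set α) (hT : T ⊆ M.E \ {e}) :
    IsUOB (M.del {e}) A T ↔ IsUOB M A T := by
  classical
  have hTe : Disjoint T {e} := (subset_sdiff.1 hT).2
  have hdel : ∀ w, Realization M A w → (IsMinBasis (M.del {e}) w T ↔ IsMinBasis M w T) := by
    intro w hw
    obtain ⟨B₀, hB₀, heB₀⟩ := hred w hw
    rw [isMinBasis_del_iff_of_disjoint hB₀ (disjoint_singleton_right.2 heB₀)
      (singleton_subset_iff.2 he), and_iff_left hTe]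
  refine ⟨fun h w hw ↦ (hdel w hw).1 (h w (hw.del {e})), fun h w hw ↦ ?_⟩
  obtain ⟨a, ha⟩ := (hA e he).1
  have hext := hw.update_of_del_singleton ha
  have hagree : EqOn w (Function.update w e a) (M.del {e}).E :=
    fun f hf ↦ (Function.update_of_ne hf.2 a w).symm
  exact (isMinBasis_congr hagree).2 ((hdel _ hext).2 (h _ hext))

/-- Deleting a red element preserves uniformly optimal bases. -/
theorem red_delete_uob (M : Matroid α) (A : α → Set ℝ)
    (hE : M.E.Finite) (hA : IsAreaFun M A)
    (e : α) (he : e ∈ M.E) (hred : Red M A e)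
    (T : Set α) (hT : T ⊆ M.E \ {e}) :
    IsUOB (M.del {e}) A T ↔ IsUOB M A T :=
  red_delete_uob_general M A hA e he hred T hT
end

section
/- Let (M, 𝒜) be an uncertainty matroid on a finite ground set E and let 𝒜 and ℬ be two uncertainty area functions on E such that inf 𝒜(e) = inf ℬ(e) and sup 𝒜(e) = sup ℬ(e) for every e ∈ E. Then an element e ∈ E is blue (resp. red) in (M, 𝒜) if and only if it is blue (resp. red) in (M, ℬ). In particular, (M, 𝒜) and (M, cl 𝒜) have the same blue and red elements, where cl 𝒜 assigns to each e the closed interval [L_e, U_e]. -/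
open Matroid

variable {α : Type*}

/-!
Fix all weights but that of one element `x` and let it vary over `s : ℝ`. The weight of each
base is affine in `s`, of slope `1` or `0` according as the base contains `x`, and there are only
finitely many bases; so for any property `Q` of bases, the set of `s` for which some minimum
basis satisfies `Q` is closed and order-connected. If `Q` holds for a minimum basis of every
realization of `A`, it therefore survives relaxing the coordinates one at a time from `A e` to
`[inf A e, sup A e]`, and conversely. Blue and red are the cases `Q = (e ∈ ·)` and `Q = (e ∉ ·)`,
and the box `∏ [inf A e, sup A e]` depends only on the infima and suprema.
-/

open Function Set

lemma setWeight_update [DecidableEq α] {T : Set α} (hT : T.Finite) (w : α → ℝ) (x : α) (s : ℝ) :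
    setWeight (update w x s) T = setWeight w (T \ {x}) + T.indicator (fun _ ↦ s) x := by
  lift T to Finset α using hT
  by_cases hx : x ∈ T
  · rw [setWeight, setWeight, finsum_mem_coe_finset, ← Finset.coe_singleton, ← Finset.coe_sdiff,
      finsum_mem_coe_finset, Finset.sum_update_of_mem hx, indicator_of_mem (by exact hx), add_comm]
  · rw [setWeight, setWeight, finsum_mem_coe_finset, sdiff_singleton_eq_self (by exact hx),
      finsum_mem_coe_finset, Finset.sum_update_of_notMem hx, indicator_of_notMem (by exact hx),
      add_zero]

def ExistsMinBasis (M : Matroid α) (Q : Set α → Prop) (w : α → ℝ) : Prop :=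
  ∃ T, IsMinBasis M w T ∧ Q T

section
variable [DecidableEq α] {M : Matroid α}

lemma IsMinBasis.update_or_update [M.RankFinite] {w : α → ℝ} {x : α} {T₁ T₂ : Set α} {s₁ s₂ s : ℝ}
    (h₁ : IsMinBasis M (update w x s₁) T₁) (h₂ : IsMinBasis M (update w x s₂) T₂)
    (hs₁ : s₁ ≤ s) (hs₂ : s ≤ s₂) :
    IsMinBasis M (update w x s) T₁ ∨ IsMinBasis M (update w x s) T₂ := by
  -- As a function of the weight `t` of `x`, the weight of a base `B` is `c B + [x ∈ B] t`.
  set c := fun B ↦ setWeight w (B \ {x})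
  have key : ∀ T, M.IsBase T → (∀ B, M.IsBase B →
      c T₁ + T₁.indicator (fun _ ↦ s₁) x ≤ c B + B.indicator (fun _ ↦ s₁) x →
      c T₂ + T₂.indicator (fun _ ↦ s₂) x ≤ c B + B.indicator (fun _ ↦ s₂) x →
      c T + T.indicator (fun _ ↦ s) x ≤ c B + B.indicator (fun _ ↦ s) x) →
      IsMinBasis M (update w x s) T := by
    have hW := fun B (hB : M.IsBase B) ↦ setWeight_update hB.finite w x
    refine fun T hT h ↦ ⟨hT, fun B hB ↦ ?_⟩
    simpa only [hW T hT, hW B hB] using h B hB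
      (by simpa only [hW T₁ h₁.1, hW B hB] using h₁.2 B hB)
      (by simpa only [hW T₂ h₂.1, hW B hB] using h₂.2 B hB)
  by_cases hx₂ : x ∈ T₂
  · refine .inr (key T₂ h₂.1 fun B _ _ hB₂ ↦ ?_)
    by_cases hxB : x ∈ B <;> simp [indicator, hxB, hx₂] at hB₂ ⊢ <;> linarith
  by_cases hx₁ : x ∈ T₁
  · rcases le_total (c T₁ + s) (c T₂) with h | h
    · refine .inl (key T₁ h₁.1 fun B _ hB₁ hB₂ ↦ ?_)
      by_cases hxB : x ∈ B <;> simp [indicator, hxB, hx₁, hx₂] at hB₁ hB₂ ⊢ <;> linarith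
    · refine .inr (key T₂ h₂.1 fun B _ hB₁ hB₂ ↦ ?_)
      by_cases hxB : x ∈ B <;> simp [indicator, hxB, hx₁, hx₂] at hB₁ hB₂ ⊢ <;> linarith
  · refine .inl (key T₁ h₁.1 fun B _ hB₁ _ ↦ ?_)
    by_cases hxB : x ∈ B <;> simp [indicator, hxB, hx₁] at hB₁ ⊢ <;> linarith

lemma ordConnected_setOf_existsMinBasis_update [M.RankFinite] (Q : Set α → Prop) (w : α → ℝ)
    (x : α) : OrdConnected {s | ExistsMinBasis M Q (update w x s)} :=
  ⟨fun _ ⟨T₁, h₁, hQ₁⟩ _ ⟨T₂, h₂, hQ₂⟩ _ ⟨hs₁, hs₂⟩ ↦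
    (h₁.update_or_update h₂ hs₁ hs₂).elim (fun h ↦ ⟨T₁, h, hQ₁⟩) fun h ↦ ⟨T₂, h, hQ₂⟩⟩

lemma isClosed_setOf_existsMinBasis_update [M.Finite] (Q : Set α → Prop) (w : α → ℝ)
    (x : α) : IsClosed {s | ExistsMinBasis M Q (update w x s)} := by
  have hfin : {T | M.IsBase T}.Finite :=
    M.ground_finite.finite_subsets.subset fun T hT ↦ hT.subset_ground
  have hcont : ∀ T, M.IsBase T → Continuous fun s ↦ setWeight (update w x s) T := by
    intro T hT
    simp_rw [setWeight_update hT.finite]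
    by_cases hx : x ∈ T <;> simp only [indicator, hx, if_true, if_false] <;> fun_prop
  have hset : {s | ExistsMinBasis M Q (update w x s)} = ⋃ T ∈ {T | M.IsBase T ∧ Q T},
      ⋂ B ∈ {B | M.IsBase B}, {s | setWeight (update w x s) T ≤ setWeight (update w x s) B} := by
    ext s
    simp [ExistsMinBasis, IsMinBasis, and_assoc, and_comm]
  rw [hset]
  exact (hfin.subset fun T hT ↦ hT.1).isClosed_biUnion fun T hT ↦
    isClosed_biInter fun B _ ↦ isClosed_le (hcont T hT.1) (hcont B ‹_›)
end

theorem Icc_csInf_csSup_subset_of_subset {β : Type*} [ConditionallyCompleteLinearOrder β]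
    [TopologicalSpace β] [OrderTopology β] {S A : Set β} (hS : IsClosed S) (hS' : S.OrdConnected)
    (hA : A.Nonempty) (hb : BddBelow A) (ha : BddAbove A) (hAS : A ⊆ S) :
    Icc (sInf A) (sSup A) ⊆ S :=
  hS'.out (hS.closure_subset_iff.2 hAS (csInf_mem_closure hA hb))
    (hS.closure_subset_iff.2 hAS (csSup_mem_closure hA ha))

theorem IsAreaFun.realization_Icc {M : Matroid α} {A : α → Set ℝ} (hA : IsAreaFun M A)
    {w : α → ℝ} (hw : Realization M A w) :
    Realization M (fun x ↦ Icc (sInf (A x)) (sSup (A x))) w :=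
  fun x hx ↦ subset_Icc_csInf_csSup (hA x hx).2.1 (hA x hx).2.2 (hw x hx)

theorem forall_realization_Icc_of_forall_realization [DecidableEq α] {M : Matroid α} [M.Finite]
    {A : α → Set ℝ} (hA : IsAreaFun M A) {P : (α → ℝ) → Prop}
    (hP : ∀ w, ∀ x ∈ M.E, IsClosed {s | P (update w x s)} ∧ OrdConnected {s | P (update w x s)})
    (h : ∀ w, Realization M A w → P w) {w : α → ℝ}
    (hw : Realization M (fun x ↦ Icc (sInf (A x)) (sSup (A x))) w) : P w := by
  refine Set.Finite.induction_on_subset M.E M.ground_finite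
    (motive := fun F _ ↦ ∀ w, Realization M (fun x ↦ Icc (sInf (A x)) (sSup (A x))) w →
      (∀ x ∈ M.E \ F, w x ∈ A x) → P w)
    (fun w _ hwA ↦ h w fun x hx ↦ hwA x ⟨hx, notMem_empty x⟩) ?_ w hw (by simp)
  intro a F haE _ haF IH w hw hwA
  have hAS : A a ⊆ {s | P (update w a s)} := by
    intro s hs
    refine IH _ (fun x hx ↦ ?_) fun x hx ↦ ?_ <;> rcases eq_or_ne x a with rfl | hxa
    · simpa using subset_Icc_csInf_csSup (hA x hx).2.1 (hA x hx).2.2 hs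
    · simpa [hxa] using hw x hx
    · simpa using hs
    · simpa [hxa] using hwA x ⟨hx.1, by simp [hxa, hx.2]⟩
  obtain ⟨hne, hbdd, hbdd'⟩ := hA a haE
  simpa using Icc_csInf_csSup_subset_of_subset (hP w a haE).1 (hP w a haE).2 hne hbdd hbdd' hAS
    (hw a haE)

theorem forall_realization_existsMinBasis_iff_Icc {M : Matroid α} [M.Finite] {A : α → Set ℝ}
    (hA : IsAreaFun M A) (Q : Set α → Prop) :
    (∀ w, Realization M A w → ExistsMinBasis M Q w) ↔
      ∀ w, Realization M (fun x ↦ Icc (sInf (A x)) (sSup (A x))) w → ExistsMinBasis M Q w := by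
  classical
  refine ⟨fun h _ ↦ forall_realization_Icc_of_forall_realization hA (fun w x _ ↦ ?_) h,
    fun h w hw ↦ h w (hA.realization_Icc hw)⟩
  exact ⟨isClosed_setOf_existsMinBasis_update Q w x, ordConnected_setOf_existsMinBasis_update Q w x⟩

/-- Colors only depend on the infima and suprema of the areas; in particular `(M, A)` and
`(M, cl A)` have the same blue and red elements. -/
theorem colors_depend_only_on_inf_sup (M : Matroid α) (A B : α → Set ℝ)
    (hE : M.E.Finite) (hA : IsAreaFun M A) (hB : IsAreaFun M B)
    (hinf : ∀ e ∈ M.E, sInf (A e) = sInf (B e))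
    (hsup : ∀ e ∈ M.E, sSup (A e) = sSup (B e)) :
    (∀ e ∈ M.E, (Blue M A e ↔ Blue M B e) ∧ (Red M A e ↔ Red M B e)) ∧
    (∀ e ∈ M.E,
      (Blue M A e ↔ Blue M (fun x => Set.Icc (sInf (A x)) (sSup (A x))) e) ∧
      (Red M A e ↔ Red M (fun x => Set.Icc (sInf (A x)) (sSup (A x))) e)) := by
  have : M.Finite := ⟨hE⟩
  have hIcc : ∀ w, Realization M (fun x ↦ Icc (sInf (A x)) (sSup (A x))) w ↔
      Realization M (fun x ↦ Icc (sInf (B x)) (sSup (B x))) w :=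
    fun w ↦ forall₂_congr fun e he ↦ by simp only [hinf e he, hsup e he]
  have hAB (Q : Set α → Prop) : (∀ w, Realization M A w → ExistsMinBasis M Q w) ↔
      ∀ w, Realization M B w → ExistsMinBasis M Q w :=
    (forall_realization_existsMinBasis_iff_Icc hA Q).trans <|
      (forall_congr' fun w ↦ imp_congr_left (hIcc w)).trans
        (forall_realization_existsMinBasis_iff_Icc hB Q).symm
  exact ⟨fun e _ ↦ ⟨hAB (e ∈ ·), hAB (e ∉ ·)⟩, fun e _ ↦
    ⟨forall_realization_existsMinBasis_iff_Icc hA (e ∈ ·),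
      forall_realization_existsMinBasis_iff_Icc hA (e ∉ ·)⟩⟩
end
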